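/- arXiv:1508.04918 — 2 statements merged into one kernel-verified Lean document; each statement's English description precedes it below -/
import Mathlib

section
/- For all real x, y ≥ 0 and all natural numbers n, m, one has L D(n,m;·,·)(x,y) = 𝓛 D(·,·;x,y)(n,m), where L f(x,y) = ∫₀¹∫₀¹ (f(x(1−u)+yv, y(1−v)+xu) − f(x,y)) du dv acts on the continuous variables (x,y), and 𝓛 g(n,m) = Σ_{k=0}^{n} Σ_{l=0}^{m} (1/((n+1)(m+1))) (g(n−k+l, m−l+k) − g(n,m)) acts on the discrete variables (n,m). That is, the Immediate Exchange Model and the discrete dual redistribution model are dual at the level of generators with duality function D. -/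
/-!
Expanding `D(n,m; x(1-u)+yv, y(1-v)+xu)` binomially in both arguments turns the integrand into a
combination of separable monomials `u^l (1-u)^(n-k) v^k (1-v)^(m-l)`, whose integrals over the unit
square are products of Beta integrals `∫₀¹ u^a (1-u)^b du = a! b! / (a+b+1)!`. These factorials
cancel the binomial coefficients and the normalisation of `D` exactly, leaving the `(k, l)` term
`D(n-k+l, m-l+k; x, y) / ((n+1)(m+1))`, i.e. the uniform average that defines the dual jump rates.
-/

open MeasureTheory Finset

/-- The duality polynomial `D(n,m;x,y) = xⁿ yᵐ / ((n+1)! (m+1)!)`. -/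
noncomputable def dualityD (n m : ℕ) (x y : ℝ) : ℝ :=
  x ^ n * y ^ m / ((Nat.factorial (n + 1) : ℝ) * (Nat.factorial (m + 1) : ℝ))

open intervalIntegral Nat

theorem integral_pow_mul_one_sub_pow (a b : ℕ) :
    ∫ u in (0:ℝ)..1, u ^ a * (1 - u) ^ b = (a ! * b ! : ℝ) / (a + b + 1)! := by
  induction b generalizing a with
  | zero =>
    simp only [pow_zero, mul_one, integral_pow, factorial_zero, add_zero, factorial_succ]
    push_cast
    field_simp
    ring
  | succ b ih =>
    have hsplit : ∀ u : ℝ,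
        u ^ a * (1 - u) ^ (b + 1) = u ^ a * (1 - u) ^ b - u ^ (a + 1) * (1 - u) ^ b :=
      fun u => by ring
    simp_rw [hsplit]
    rw [integral_sub (Continuous.intervalIntegrable (by fun_prop) _ _)
      (Continuous.intervalIntegrable (by fun_prop) _ _), ih, ih,
      show a + 1 + b + 1 = a + b + 1 + 1 by omega, show a + (b + 1) + 1 = a + b + 1 + 1 by omega]
    simp only [factorial_succ]
    push_cast
    field_simp
    ring

theorem integral_sum_sum_const_mul {ι κ : Type*} (s : Finset ι) (t : Finset κ)
    (c : ι → κ → ℝ) (f : ι → κ → ℝ → ℝ) {a b : ℝ}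
    (hf : ∀ i j, IntervalIntegrable (f i j) volume a b) :
    ∫ v in a..b, ∑ i ∈ s, ∑ j ∈ t, c i j * f i j v =
      ∑ i ∈ s, ∑ j ∈ t, c i j * ∫ v in a..b, f i j v := by
  have hterm : ∀ i j, IntervalIntegrable (fun v => c i j * f i j v) volume a b :=
    fun i j => (hf i j).const_mul _
  rw [integral_finsetSum fun i _ => by
    simpa only [Finset.sum_fn] using IntervalIntegrable.sum t fun j _ => hterm i j]
  simp only [integral_finsetSum fun j _ => hterm _ j, intervalIntegral.integral_const_mul]

theorem integral_integral_sum_sum_mul {ι κ : Type*} (s : Finset ι) (t : Finset κ)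
    (c : ι → κ → ℝ) (p q : ι → κ → ℝ → ℝ) {a b a' b' : ℝ}
    (hp : ∀ i j, IntervalIntegrable (p i j) volume a b)
    (hq : ∀ i j, IntervalIntegrable (q i j) volume a' b') :
    ∫ u in a..b, ∫ v in a'..b', ∑ i ∈ s, ∑ j ∈ t, c i j * p i j u * q i j v =
      ∑ i ∈ s, ∑ j ∈ t, c i j * (∫ u in a..b, p i j u) * ∫ v in a'..b', q i j v := by
  simp_rw [integral_sum_sum_const_mul s t _ q hq, mul_right_comm (c _ _) (p _ _ _)]
  rw [integral_sum_sum_const_mul s t _ p hp]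
  exact sum_congr rfl fun i _ => sum_congr rfl fun j _ => mul_right_comm _ _ _

/-- The generator `L` of the two-agent Immediate Exchange Model. -/
noncomputable def iemGenerator (f : ℝ → ℝ → ℝ) (x y : ℝ) : ℝ :=
  ∫ u in (0:ℝ)..1, ∫ v in (0:ℝ)..1, (f (x * (1 - u) + y * v) (y * (1 - v) + x * u) - f x y)

/-- The generator `𝓛` of the discrete dual process. -/
noncomputable def dualGenerator (g : ℕ → ℕ → ℝ) (n m : ℕ) : ℝ :=
  ∑ k ∈ range (n + 1), ∑ l ∈ range (m + 1),
    (1 / (((n : ℝ) + 1) * ((m : ℝ) + 1))) * (g (n - k + l) (m - l + k) - g n m)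

theorem iemGenerator_eq_integral_sub {f : ℝ → ℝ → ℝ} (hf : Continuous (Function.uncurry f))
    (x y : ℝ) :
    iemGenerator f x y =
      (∫ u in (0:ℝ)..1, ∫ v in (0:ℝ)..1, f (x * (1 - u) + y * v) (y * (1 - v) + x * u))
        - f x y := by
  have hF : Continuous
      (Function.uncurry fun u v => f (x * (1 - u) + y * v) (y * (1 - v) + x * u)) :=
    hf.comp (by fun_prop :
      Continuous fun p : ℝ × ℝ => (x * (1 - p.1) + y * p.2, y * (1 - p.2) + x * p.1))
  have hinner : ∀ u,
      ∫ v in (0:ℝ)..1, (f (x * (1 - u) + y * v) (y * (1 - v) + x * u) - f x y) =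
        (∫ v in (0:ℝ)..1, f (x * (1 - u) + y * v) (y * (1 - v) + x * u)) - f x y := fun u => by
    rw [integral_sub ((hF.uncurry_left u).intervalIntegrable _ _) intervalIntegrable_const,
      intervalIntegral.integral_const, sub_zero, one_smul]
  simp_rw [iemGenerator, hinner]
  rw [integral_sub
      ((continuous_parametric_intervalIntegral_of_continuous' hF 0 1).intervalIntegrable _ _)
      intervalIntegrable_const, intervalIntegral.integral_const, sub_zero, one_smul]

theorem dualGenerator_eq_average_sub (g : ℕ → ℕ → ℝ) (n m : ℕ) :
    dualGenerator g n m =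
      (∑ k ∈ range (n + 1), ∑ l ∈ range (m + 1), g (n - k + l) (m - l + k)) /
        (((n : ℝ) + 1) * ((m : ℝ) + 1)) - g n m := by
  simp only [dualGenerator, mul_sub, sum_sub_distrib, ← mul_sum, sum_const, card_range,
    nsmul_eq_mul]
  push_cast
  field_simp

theorem dualityD_exchange_eq_sum (n m : ℕ) (x y u v : ℝ) :
    dualityD n m (x * (1 - u) + y * v) (y * (1 - v) + x * u) =
      ∑ k ∈ range (n + 1), ∑ l ∈ range (m + 1),
        (n.choose k * m.choose l * x ^ (n - k + l) * y ^ (m - l + k) / ((n + 1)! * (m + 1)!)) *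
          (u ^ l * (1 - u) ^ (n - k)) * (v ^ k * (1 - v) ^ (m - l)) := by
  rw [dualityD, add_comm (x * (1 - u)), add_comm (y * (1 - v)), add_pow, add_pow, sum_mul_sum,
    sum_div]
  refine sum_congr rfl fun k _ => ?_
  rw [sum_div]
  refine sum_congr rfl fun l _ => ?_
  simp only [mul_pow, pow_add]
  ring

theorem integral_integral_dualityD_exchange (n m : ℕ) (x y : ℝ) :
    ∫ u in (0:ℝ)..1, ∫ v in (0:ℝ)..1, dualityD n m (x * (1 - u) + y * v) (y * (1 - v) + x * u) =
      (∑ k ∈ range (n + 1), ∑ l ∈ range (m + 1), dualityD (n - k + l) (m - l + k) x y) /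
        (((n : ℝ) + 1) * ((m : ℝ) + 1)) := by
  simp_rw [dualityD_exchange_eq_sum]
  rw [integral_integral_sum_sum_mul _ _ _ _ _
      (fun _ _ => Continuous.intervalIntegrable (by fun_prop) _ _)
      (fun _ _ => Continuous.intervalIntegrable (by fun_prop) _ _), sum_div]
  refine sum_congr rfl fun k hk => ?_
  rw [sum_div]
  refine sum_congr rfl fun l hl => ?_
  rw [integral_pow_mul_one_sub_pow, integral_pow_mul_one_sub_pow, dualityD, add_comm l,
    add_comm k, cast_choose ℝ (mem_range_succ_iff.mp hk), cast_choose ℝ (mem_range_succ_iff.mp hl),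
    factorial_succ n, factorial_succ m]
  push_cast
  field_simp

theorem immediate_exchange_generator_duality_general
    (x y : ℝ) (n m : ℕ) :
    (∫ u in (0:ℝ)..1, ∫ v in (0:ℝ)..1,
        (dualityD n m (x * (1 - u) + y * v) (y * (1 - v) + x * u) - dualityD n m x y))
      = ∑ k ∈ Finset.range (n + 1), ∑ l ∈ Finset.range (m + 1),
          (1 / (((n : ℝ) + 1) * ((m : ℝ) + 1))) *
            (dualityD (n - k + l) (m - l + k) x y - dualityD n m x y) := by
  change iemGenerator (dualityD n m) x y = dualGenerator (fun k l => dualityD k l x y) n m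
  rw [iemGenerator_eq_integral_sub (by unfold dualityD; fun_prop), dualGenerator_eq_average_sub,
    integral_integral_dualityD_exchange]

/-- Generator duality for the Immediate Exchange Model: `L D(n,m;·,·)(x,y) =
𝓛 D(·,·;x,y)(n,m)`, where `L f(x,y) = ∫₀¹∫₀¹ (f(x(1−u)+yv, y(1−v)+xu) − f(x,y)) du dv` and
`𝓛 g(n,m) = Σ_{k=0}^{n} Σ_{l=0}^{m} (1/((n+1)(m+1))) (g(n−k+l, m−l+k) − g(n,m))`. -/
theorem immediate_exchange_generator_duality
    (x y : ℝ) (hx : 0 ≤ x) (hy : 0 ≤ y) (n m : ℕ) :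
    (∫ u in (0:ℝ)..1, ∫ v in (0:ℝ)..1,
        (dualityD n m (x * (1 - u) + y * v) (y * (1 - v) + x * u) - dualityD n m x y))
      = ∑ k ∈ Finset.range (n + 1), ∑ l ∈ Finset.range (m + 1),
          (1 / (((n : ℝ) + 1) * ((m : ℝ) + 1))) *
            (dualityD (n - k + l) (m - l + k) x y - dualityD n m x y) :=
  immediate_exchange_generator_duality_general x y n m
end

section
/- Self-duality of the discrete dual process: for all real s,t > 0 and all (k,l), (n,m) ∈ ℕ², Σ_{a=0}^{n} Σ_{b=0}^{m} r_{s,t}(n,m;a,b) (D(k,l; n−a+b, m−b+a) − D(k,l;n,m)) = Σ_{a=0}^{k} Σ_{b=0}^{l} r_{s,t}(k,l;a,b) (D(k−a+b, l−b+a; n,m) − D(k,l;n,m)), where D(k,l;n,m) = d_{s,t}(k,n) d_{s,t}(l,m) with d_{s,t}(k,n) = Γ(n+1) Γ(s+t) / (Γ(n−k+1) Γ(s+t+k)) for n ≥ k and 0 otherwise. That is, applying the generator 𝓛 in the variables (n,m) to D(k,l;·,·) gives the same result as applying 𝓛 in the variables (k,l) to D(·,·;n,m). -/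
open Finset Real Nat

noncomputable def asc (x : ℝ) (k : ℕ) : ℝ := ∏ i ∈ Finset.range k, (x + i)

lemma asc_zero (x : ℝ) : asc x 0 = 1 := by simp [asc]

lemma asc_succ (x : ℝ) (k : ℕ) : asc x (k + 1) = asc x k * (x + k) := by
  simp [asc, Finset.prod_range_succ]

lemma asc_pos {x : ℝ} (hx : 0 < x) (k : ℕ) : 0 < asc x k := by
  apply Finset.prod_pos
  intro i _
  positivity

lemma Gamma_add_nat {x : ℝ} (hx : 0 < x) (k : ℕ) :
    Real.Gamma (x + k) = asc x k * Real.Gamma x := by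
  induction k with
  | zero => simp [asc_zero]
  | succ k ih =>
      have h : x + (k + 1 : ℕ) = (x + k) + 1 := by push_cast; ring
      rw [h, Real.Gamma_add_one (by positivity), ih, asc_succ]
      ring

lemma asc_add (x : ℝ) (i j : ℕ) : asc x (i + j) = asc x i * asc (x + i) j := by
  simp only [asc]
  rw [Finset.prod_range_add]
  congr 1
  apply Finset.prod_congr rfl
  intro b _
  push_cast
  ring

lemma asc_vandermonde (x y : ℝ) :
    ∀ N : ℕ, asc (x + y) N =
      ∑ a ∈ Finset.range (N + 1), (N.choose a : ℝ) * asc x a * asc y (N - a)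
  | 0 => by simp [asc_zero]
  | N + 1 => by
      rw [asc_succ, asc_vandermonde x y N, Finset.sum_mul]
      have hterm : ∀ a ∈ Finset.range (N + 1),
          (N.choose a : ℝ) * asc x a * asc y (N - a) * (x + y + N)
          = (N.choose a : ℝ) * asc x (a + 1) * asc y (N - a)
            + (N.choose a : ℝ) * asc x a * asc y (N + 1 - a) := by
        intro a ha
        rw [Finset.mem_range] at ha
        have haN : a ≤ N := by omega
        have h1 : (x + y + N) = (x + a) + (y + ((N - a : ℕ) : ℝ)) := by
          have : ((N - a : ℕ) : ℝ) = (N : ℝ) - a := by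
            push_cast [haN]; ring
          rw [this]; ring
        have h2 : N + 1 - a = (N - a) + 1 := by omega
        rw [h1, h2, asc_succ, asc_succ]
        ring
      rw [Finset.sum_congr rfl hterm, Finset.sum_add_distrib]
      -- target sum
      rw [Finset.sum_range_succ' (fun a => ((N+1).choose a : ℝ) * asc x a * asc y (N + 1 - a)) (N+1)]
      have hpascal : ∀ a ∈ Finset.range (N + 1),
          ((N+1).choose (a+1) : ℝ) * asc x (a+1) * asc y (N + 1 - (a+1))
          = (N.choose a : ℝ) * asc x (a+1) * asc y (N - a)
            + (N.choose (a+1) : ℝ) * asc x (a+1) * asc y (N - a) := by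
        intro a ha
        have h2 : N + 1 - (a + 1) = N - a := by omega
        rw [h2, Nat.choose_succ_succ]
        push_cast
        ring
      rw [Finset.sum_congr rfl hpascal, Finset.sum_add_distrib]
      have hS2 : ∑ a ∈ Finset.range (N + 1), (N.choose (a+1) : ℝ) * asc x (a+1) * asc y (N - a)
            + ((N+1).choose 0 : ℝ) * asc x 0 * asc y (N + 1 - 0)
          = ∑ a ∈ Finset.range (N + 1), (N.choose a : ℝ) * asc x a * asc y (N + 1 - a) := by
        rw [Finset.sum_range_succ' (fun a => (N.choose a : ℝ) * asc x a * asc y (N + 1 - a)) N,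
          Finset.sum_range_succ (fun a => (N.choose (a+1) : ℝ) * asc x (a+1) * asc y (N - a)) N]
        rw [Nat.choose_succ_self]
        congr 1
        · rw [Nat.cast_zero, zero_mul, zero_mul, add_zero]
          apply Finset.sum_congr rfl
          intro a ha
          have : N + 1 - (a + 1) = N - a := by omega
          rw [this]
        · simp
      rw [add_assoc, hS2]


open Finset Real

/-- Beta-binomial(n,s,t) probability mass function. -/
noncomputable def wBB (s t : ℝ) (n k : ℕ) : ℝ :=
  Real.Gamma ((n : ℝ) + 1) * Real.Gamma ((k : ℝ) + s) * Real.Gamma (((n - k : ℕ) : ℝ) + t) *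
      Real.Gamma (s + t) /
    (Real.Gamma s * Real.Gamma t * Real.Gamma (s + t + n) * Real.Gamma ((k : ℝ) + 1) *
      Real.Gamma (((n - k : ℕ) : ℝ) + 1))

/-- Redistribution rates of the discrete dual process. -/
noncomputable def rRate (s t : ℝ) (n m k l : ℕ) : ℝ := wBB s t n k * wBB s t m l

/-- Discrete duality polynomial `d_{s,t}(k,n) = Γ(n+1)Γ(s+t)/(Γ(n−k+1)Γ(s+t+k))` for
`n ≥ k`, and 0 for `n < k`. -/
noncomputable def dDisc (s t : ℝ) (k n : ℕ) : ℝ :=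
  if k ≤ n then
    Real.Gamma ((n : ℝ) + 1) * Real.Gamma (s + t) /
      (Real.Gamma (((n - k : ℕ) : ℝ) + 1) * Real.Gamma (s + t + k))
  else 0

/-- Self-duality polynomial `D(k,l;n,m) = d_{s,t}(k,n) d_{s,t}(l,m)`. -/
noncomputable def DDisc (s t : ℝ) (k l n m : ℕ) : ℝ := dDisc s t k n * dDisc s t l m

lemma cast_desc {n k : ℕ} (h : k ≤ n) :
    ((n.descFactorial k : ℕ) : ℝ) = (n ! : ℝ) / ((n - k)! : ℝ) := by
  have := Nat.factorial_mul_descFactorial h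
  field_simp
  rw [mul_comm]
  exact_mod_cast congrArg (Nat.cast : ℕ → ℝ) this

lemma desc_vandermonde (x y K : ℕ) :
    (x + y).descFactorial K
      = ∑ j ∈ Finset.range (K + 1), K.choose j * x.descFactorial j * y.descFactorial (K - j) := by
  have h := Nat.add_choose_eq x y K
  have h2 : (x + y).descFactorial K = K ! * (x + y).choose K :=
    Nat.descFactorial_eq_factorial_mul_choose _ _
  rw [h2, h, Finset.Nat.sum_antidiagonal_eq_sum_range_succ_mk, Finset.mul_sum]
  apply Finset.sum_congr rfl
  intro j hj
  rw [Finset.mem_range] at hj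
  have hjK : j ≤ K := by omega
  rw [Nat.descFactorial_eq_factorial_mul_choose x j,
      Nat.descFactorial_eq_factorial_mul_choose y (K - j),
      ← Nat.choose_mul_factorial_mul_factorial hjK]
  ring

lemma wBB_eq {s t : ℝ} (hs : 0 < s) (ht : 0 < t) {n a : ℕ} (h : a ≤ n) :
    wBB s t n a = (n.choose a : ℝ) * asc s a * asc t (n - a) / asc (s + t) n := by
  have hst : 0 < s + t := by linarith
  rw [wBB]
  rw [show ((a : ℝ) + s) = s + a by ring, Gamma_add_nat hs]
  rw [show (((n - a : ℕ) : ℝ) + t) = t + ((n-a : ℕ) : ℝ) by ring, Gamma_add_nat ht]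
  rw [Gamma_add_nat hst n]
  rw [Real.Gamma_nat_eq_factorial, Real.Gamma_nat_eq_factorial, Real.Gamma_nat_eq_factorial]
  rw [Nat.cast_choose ℝ h]
  have h1 : Real.Gamma s ≠ 0 := (Real.Gamma_pos_of_pos hs).ne'
  have h2 : Real.Gamma t ≠ 0 := (Real.Gamma_pos_of_pos ht).ne'
  have h3 : Real.Gamma (s + t) ≠ 0 := (Real.Gamma_pos_of_pos hst).ne'
  have h4 : asc (s + t) n ≠ 0 := (asc_pos hst n).ne'
  have h5 : (a ! : ℝ) ≠ 0 := by positivity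
  have h6 : ((n - a)! : ℝ) ≠ 0 := by positivity
  field_simp

lemma dDisc_eq {s t : ℝ} (hs : 0 < s) (ht : 0 < t) (k n : ℕ) :
    dDisc s t k n = ((n.descFactorial k : ℕ) : ℝ) / asc (s + t) k := by
  have hst : 0 < s + t := by linarith
  rw [dDisc]
  split_ifs with h
  · rw [Real.Gamma_nat_eq_factorial, Real.Gamma_nat_eq_factorial, Gamma_add_nat hst k,
      cast_desc h]
    have h3 : Real.Gamma (s + t) ≠ 0 := (Real.Gamma_pos_of_pos hst).ne'
    have h4 : asc (s + t) k ≠ 0 := (asc_pos hst k).ne'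
    have h6 : ((n - k)! : ℝ) ≠ 0 := by positivity
    field_simp
  · rw [Nat.descFactorial_eq_zero_iff_lt.mpr (by omega), Nat.cast_zero, zero_div]
lemma nat_key (x c i j : ℕ) :
    ((x + c + i + j).choose (j + x) : ℝ) * (((c + i).descFactorial i : ℕ) : ℝ)
        * (((j + x).descFactorial j : ℕ) : ℝ)
      = (((x + c + i + j).descFactorial (i + j) : ℕ) : ℝ) * ((x + c).choose x : ℝ) := by
  rw [cast_desc (show i ≤ c + i by omega), show c + i - i = c from by omega]
  rw [cast_desc (show j ≤ j + x by omega), show j + x - j = x from by omega]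
  rw [cast_desc (show i + j ≤ x + c + i + j by omega),
    show x + c + i + j - (i + j) = x + c from by omega]
  rw [Nat.cast_choose ℝ (show j + x ≤ x + c + i + j by omega),
    show x + c + i + j - (j + x) = c + i from by omega]
  rw [Nat.cast_choose ℝ (show x ≤ x + c by omega), show x + c - x = c from by omega]
  have n3 : ((j + x)! : ℝ) ≠ 0 := by positivity
  have n4 : ((c + i)! : ℝ) ≠ 0 := by positivity
  have n5 : ((x + c)! : ℝ) ≠ 0 := by positivity
  have n6 : (x ! : ℝ) ≠ 0 := by positivity
  have n7 : (c ! : ℝ) ≠ 0 := by positivity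
  field_simp

set_option maxHeartbeats 2000000 in
lemma moment {s t : ℝ} (hs : 0 < s) (ht : 0 < t) (n i j : ℕ) :
    ∑ a ∈ Finset.range (n + 1),
        wBB s t n a * ((n - a).descFactorial i : ℝ) * ((a.descFactorial j : ℕ) : ℝ)
      = ((n.descFactorial (i + j) : ℕ) : ℝ) * asc t i * asc s j / asc (s + t) (i + j) := by
  have hst : 0 < s + t := by linarith
  by_cases hn : n < i + j
  · rw [Nat.descFactorial_eq_zero_iff_lt.mpr hn]
    rw [Nat.cast_zero, zero_mul, zero_mul, zero_div]
    apply Finset.sum_eq_zero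
    intro a ha
    rw [Finset.mem_range] at ha
    by_cases haj : a < j
    · rw [Nat.descFactorial_eq_zero_iff_lt.mpr haj, Nat.cast_zero, mul_zero]
    · rw [Nat.descFactorial_eq_zero_iff_lt.mpr (show n - a < i by omega), Nat.cast_zero,
        mul_zero, zero_mul]
  push_neg at hn
  obtain ⟨N, rfl⟩ : ∃ N, n = N + i + j := ⟨n - (i + j), by omega⟩
  have hsplit : N + i + j + 1 = j + ((N + 1) + i) := by omega
  rw [hsplit, Finset.sum_range_add]
  have hzero1 : ∑ a ∈ Finset.range j,
      wBB s t (N + i + j) a * (((N + i + j) - a).descFactorial i : ℝ)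
        * ((a.descFactorial j : ℕ) : ℝ) = 0 := by
    apply Finset.sum_eq_zero
    intro a ha
    rw [Finset.mem_range] at ha
    rw [Nat.descFactorial_eq_zero_iff_lt.mpr ha, Nat.cast_zero, mul_zero]
  rw [hzero1, zero_add, Finset.sum_range_add]
  have hzero2 : ∑ a ∈ Finset.range i,
      wBB s t (N + i + j) (j + (N + 1 + a)) * (((N + i + j) - (j + (N + 1 + a))).descFactorial i : ℝ)
        * (((j + (N + 1 + a)).descFactorial j : ℕ) : ℝ) = 0 := by
    apply Finset.sum_eq_zero
    intro a ha
    rw [Finset.mem_range] at ha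
    rw [Nat.descFactorial_eq_zero_iff_lt.mpr (show N + i + j - (j + (N + 1 + a)) < i by omega),
      Nat.cast_zero, mul_zero, zero_mul]
  rw [hzero2, add_zero]
  have hbase : (s + (j : ℝ)) + (t + (i : ℝ)) = (s + t) + ((i + j : ℕ) : ℝ) := by
    push_cast; ring
  have hvdm := asc_vandermonde (s + (j : ℝ)) (t + (i : ℝ)) N
  have hterm : ∀ x ∈ Finset.range (N + 1),
      wBB s t (N + i + j) (j + x) * (((N + i + j) - (j + x)).descFactorial i : ℝ)
        * (((j + x).descFactorial j : ℕ) : ℝ)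
      = (((N + i + j).descFactorial (i + j) : ℕ) : ℝ) * asc t i * asc s j / asc (s + t) (i + j)
        * ((N.choose x : ℝ) * asc (s + (j:ℝ)) x * asc (t + (i:ℝ)) (N - x)
            / asc ((s + t) + ((i + j : ℕ) : ℝ)) N) := by
    intro x hx
    rw [Finset.mem_range] at hx
    obtain ⟨c, rfl⟩ : ∃ c, N = x + c := ⟨N - x, by omega⟩
    have e1 : x + c + i + j - (j + x) = c + i := by omega
    have e2 : x + c - x = c := by omega
    rw [e1, e2]
    rw [wBB_eq hs ht (show j + x ≤ x + c + i + j by omega), e1]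
    rw [show asc s (j + x) = asc s j * asc (s + (j:ℝ)) x from asc_add s j x]
    rw [show c + i = i + c from by omega,
      show asc t (i + c) = asc t i * asc (t + (i:ℝ)) c from asc_add t i c]
    rw [show x + c + i + j = (i + j) + (x + c) from by omega,
      show asc (s+t) ((i+j) + (x+c)) = asc (s+t) (i+j) * asc ((s+t) + ((i+j:ℕ):ℝ)) (x+c)
        from asc_add (s+t) (i+j) (x+c)]
    have key := nat_key x c i j
    rw [show c + i = i + c from by omega, show x + c + i + j = (i + j) + (x + c) from by omega]
      at key
    have hb2 : (s + t) + ((i + j : ℕ) : ℝ) = s + t + (i : ℝ) + (j : ℝ) := by push_cast; ring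
    rw [hb2]
    have n1 : asc (s + t) (i + j) ≠ 0 := (asc_pos hst _).ne'
    have n2 : asc (s + t + (i : ℝ) + (j : ℝ)) (x + c) ≠ 0 := by
      rw [← hb2]; exact (asc_pos (by positivity) _).ne'
    field_simp [n1, n2]
    linear_combination (asc s j * asc (s + (j:ℝ)) x * asc t i * asc (t + (i:ℝ)) c) * key
  rw [Finset.sum_congr rfl hterm, ← Finset.mul_sum, ← Finset.sum_div, ← hbase, ← hvdm]
  have n2 : asc ((s + (j:ℝ)) + (t + (i:ℝ))) N ≠ 0 := (asc_pos (by positivity) N).ne'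
  rw [div_self n2, mul_one]
lemma wBB_sum {s t : ℝ} (hs : 0 < s) (ht : 0 < t) (n : ℕ) :
    ∑ a ∈ Finset.range (n + 1), wBB s t n a = 1 := by
  have h := moment hs ht n 0 0
  simp only [Nat.descFactorial_zero, Nat.cast_one, mul_one, asc_zero, Nat.add_zero, div_one]
    at h
  exact h

lemma sum_swap4 (s1 s2 s3 s4 : Finset ℕ) (f : ℕ → ℕ → ℕ → ℕ → ℝ) :
    (∑ a ∈ s1, ∑ b ∈ s2, ∑ c ∈ s3, ∑ d ∈ s4, f a b c d)
      = ∑ c ∈ s3, ∑ d ∈ s4, ∑ a ∈ s1, ∑ b ∈ s2, f a b c d := by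
  have h1 : (∑ a ∈ s1, ∑ b ∈ s2, ∑ c ∈ s3, ∑ d ∈ s4, f a b c d)
      = ∑ a ∈ s1, ∑ c ∈ s3, ∑ b ∈ s2, ∑ d ∈ s4, f a b c d :=
    Finset.sum_congr rfl fun a _ => Finset.sum_comm
  rw [h1, Finset.sum_comm]
  refine Finset.sum_congr rfl fun c _ => ?_
  have h2 : (∑ a ∈ s1, ∑ b ∈ s2, ∑ d ∈ s4, f a b c d)
      = ∑ a ∈ s1, ∑ d ∈ s4, ∑ b ∈ s2, f a b c d :=
    Finset.sum_congr rfl fun a _ => Finset.sum_comm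
  rw [h2, Finset.sum_comm]

/-- Self-duality of the discrete dual process at the level of generators:
applying the generator 𝓛 in the variables (n,m) to `D(k,l;·,·)` gives the same result as
applying 𝓛 in the variables (k,l) to `D(·,·;n,m)`. -/
theorem discrete_dual_self_duality
    (s t : ℝ) (hs : 0 < s) (ht : 0 < t) (k l n m : ℕ) :
    (∑ a ∈ Finset.range (n + 1), ∑ b ∈ Finset.range (m + 1),
        rRate s t n m a b *
          (DDisc s t k l (n - a + b) (m - b + a) - DDisc s t k l n m))
    = ∑ a ∈ Finset.range (k + 1), ∑ b ∈ Finset.range (l + 1),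
        rRate s t k l a b *
          (DDisc s t (k - a + b) (l - b + a) n m - DDisc s t k l n m) := by
  have hst : 0 < s + t := by linarith
  have const1 : ∀ (n m : ℕ) (c : ℝ),
      ∑ a ∈ Finset.range (n + 1), ∑ b ∈ Finset.range (m + 1),
        wBB s t n a * wBB s t m b * c = c := by
    intro n m c
    have hb : ∀ a : ℕ, ∑ b ∈ Finset.range (m + 1), wBB s t n a * wBB s t m b * c
        = wBB s t n a * c := by
      intro a
      have : ∑ b ∈ Finset.range (m + 1), wBB s t n a * wBB s t m b * c
          = (∑ b ∈ Finset.range (m + 1), wBB s t m b) * (wBB s t n a * c) := by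
        rw [Finset.sum_mul]
        exact Finset.sum_congr rfl fun b _ => by ring
      rw [this, wBB_sum hs ht m, one_mul]
    rw [Finset.sum_congr rfl fun a _ => hb a, ← Finset.sum_mul, wBB_sum hs ht n, one_mul]
  have split : ∀ (n m : ℕ) (F : ℕ → ℕ → ℝ) (c : ℝ),
      ∑ a ∈ Finset.range (n + 1), ∑ b ∈ Finset.range (m + 1),
        wBB s t n a * wBB s t m b * (F a b - c)
      = (∑ a ∈ Finset.range (n + 1), ∑ b ∈ Finset.range (m + 1),
          wBB s t n a * wBB s t m b * F a b) - c := by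
    intro n m F c
    simp only [mul_sub, Finset.sum_sub_distrib]
    rw [const1 n m c]
  simp only [rRate]
  rw [split n m _ _, split k l _ _, sub_left_inj]
  -- core identity
  have hPk : asc (s + t) k ≠ 0 := (asc_pos hst k).ne'
  have hPl : asc (s + t) l ≠ 0 := (asc_pos hst l).ne'
  -- step A: expand LHS into 4-fold sum
  have lhs1 : (∑ a ∈ Finset.range (n + 1), ∑ b ∈ Finset.range (m + 1),
        wBB s t n a * wBB s t m b * DDisc s t k l (n - a + b) (m - b + a))
      = ∑ a ∈ Finset.range (n + 1), ∑ b ∈ Finset.range (m + 1),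
          ∑ j1 ∈ Finset.range (k + 1), ∑ j2 ∈ Finset.range (l + 1),
            (k.choose j1 : ℝ) * (l.choose j2 : ℝ) / (asc (s + t) k * asc (s + t) l)
              * (wBB s t n a * (((n - a).descFactorial j1 : ℕ) : ℝ)
                  * ((a.descFactorial (l - j2) : ℕ) : ℝ))
              * (wBB s t m b * (((m - b).descFactorial j2 : ℕ) : ℝ)
                  * ((b.descFactorial (k - j1) : ℕ) : ℝ)) := by
    refine Finset.sum_congr rfl fun a _ => Finset.sum_congr rfl fun b _ => ?_
    rw [DDisc, dDisc_eq hs ht, dDisc_eq hs ht]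
    have h1 := congrArg (Nat.cast : ℕ → ℝ) (desc_vandermonde (n - a) b k)
    have h2 := congrArg (Nat.cast : ℕ → ℝ) (desc_vandermonde (m - b) a l)
    push_cast at h1 h2
    rw [h1, h2]
    simp only [Finset.sum_div, Finset.sum_mul, Finset.mul_sum]
    rw [Finset.sum_comm]
    refine Finset.sum_congr rfl fun j1 _ => Finset.sum_congr rfl fun j2 _ => ?_
    ring
  rw [lhs1, sum_swap4]
  -- step B: factor inner double sums and apply moment
  have lhs2 : ∀ j1 j2 : ℕ,
      (∑ a ∈ Finset.range (n + 1), ∑ b ∈ Finset.range (m + 1),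
        (k.choose j1 : ℝ) * (l.choose j2 : ℝ) / (asc (s + t) k * asc (s + t) l)
          * (wBB s t n a * (((n - a).descFactorial j1 : ℕ) : ℝ)
              * ((a.descFactorial (l - j2) : ℕ) : ℝ))
          * (wBB s t m b * (((m - b).descFactorial j2 : ℕ) : ℝ)
              * ((b.descFactorial (k - j1) : ℕ) : ℝ)))
      = (k.choose j1 : ℝ) * (l.choose j2 : ℝ) / (asc (s + t) k * asc (s + t) l)
          * (((n.descFactorial (j1 + (l - j2)) : ℕ) : ℝ) * asc t j1 * asc s (l - j2)
              / asc (s + t) (j1 + (l - j2)))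
          * (((m.descFactorial (j2 + (k - j1)) : ℕ) : ℝ) * asc t j2 * asc s (k - j1)
              / asc (s + t) (j2 + (k - j1))) := by
    intro j1 j2
    rw [← moment hs ht n j1 (l - j2), ← moment hs ht m j2 (k - j1)]
    rw [mul_assoc, Finset.sum_mul_sum]
    simp only [Finset.mul_sum]
    refine Finset.sum_congr rfl fun a _ => Finset.sum_congr rfl fun b _ => ?_
    ring
  rw [Finset.sum_congr rfl fun j1 _ => Finset.sum_congr rfl fun j2 _ => lhs2 j1 j2]
  -- step C: rewrite RHS
  have rhs1 : (∑ a ∈ Finset.range (k + 1), ∑ b ∈ Finset.range (l + 1),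
        wBB s t k a * wBB s t l b * DDisc s t (k - a + b) (l - b + a) n m)
      = ∑ a ∈ Finset.range (k + 1), ∑ b ∈ Finset.range (l + 1),
          (k.choose a : ℝ) * asc s a * asc t (k - a) / asc (s + t) k
            * ((l.choose b : ℝ) * asc s b * asc t (l - b) / asc (s + t) l)
            * (((n.descFactorial (k - a + b) : ℕ) : ℝ) / asc (s + t) (k - a + b))
            * (((m.descFactorial (l - b + a) : ℕ) : ℝ) / asc (s + t) (l - b + a)) := by
    refine Finset.sum_congr rfl fun a ha => Finset.sum_congr rfl fun b hb => ?_
    rw [Finset.mem_range] at ha hb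
    rw [DDisc, dDisc_eq hs ht, dDisc_eq hs ht,
      wBB_eq hs ht (show a ≤ k by omega), wBB_eq hs ht (show b ≤ l by omega)]
    ring
  rw [rhs1]
  -- step D: reflect indices and match
  rw [← Finset.sum_range_reflect]
  refine Finset.sum_congr rfl fun a ha => ?_
  rw [← Finset.sum_range_reflect]
  refine Finset.sum_congr rfl fun b hb => ?_
  rw [Finset.mem_range] at ha hb
  simp only [Nat.add_sub_cancel]
  rw [show l - (l - b) = b from by omega, show k - (k - a) = a from by omega]
  rw [Nat.choose_symm (show a ≤ k by omega), Nat.choose_symm (show b ≤ l by omega)]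
  ring
end
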